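/- arXiv:1510.05242 — 4 statements merged into one kernel-verified Lean document; each statement's English description precedes it below -/
import Mathlib

section
/- For any β ≥ -3, the function Ψ(v) = ∫₁ᵛ √φ(z) / z^((β+5)/2) dz tends to -∞ as v → 0⁺, where φ(z) = z - ln z - 1. -/
/-!
For `0 < z ≤ exp (-2)` we have `z - log z - 1 ≥ 1` and, as `(β + 5) / 2 ≥ 1`,
`z ^ ((β + 5) / 2) ≤ z`; so the integrand dominates `z⁻¹` near `0`, and `Ψ v ≤ log v + C`
for small `v`.
-/

open intervalIntegral Filter Set Real Topology

theorem tendsto_integral_nhdsGT_zero_atBot_of_inv_le {f : ℝ → ℝ} {a : ℝ} (b : ℝ) (ha : 0 < a)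
    (hb : 0 < b) (hf : ContinuousOn f (Ioi 0)) (hle : ∀ z ∈ Ioc 0 a, z⁻¹ ≤ f z) :
    Tendsto (fun v => ∫ z in b..v, f z) (𝓝[>] 0) atBot := by
  have hint {c d : ℝ} (hc : 0 < c) (hd : 0 < d) : IntervalIntegrable f MeasureTheory.volume c d :=
    (hf.mono (ordConnected_Ioi.uIcc_subset hc hd)).intervalIntegrable
  have hbound : ∀ v ∈ Ioo 0 a, ∫ z in b..v, f z ≤ log v + ((∫ z in b..a, f z) - log a) := by
    rintro v ⟨hv, hva⟩
    have hinv : IntervalIntegrable (fun z : ℝ => z⁻¹) MeasureTheory.volume v a :=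
      (continuousOn_inv₀.mono ((ordConnected_Ioi.uIcc_subset hv ha).trans
        fun _ ↦ ne_of_gt)).intervalIntegrable
    have hlog : log a - log v ≤ ∫ z in v..a, f z := by
      rw [← log_div ha.ne' hv.ne', ← integral_inv_of_pos hv ha]
      exact integral_mono_on hva.le hinv (hint hv ha) fun z hz ↦ hle z ⟨hv.trans_le hz.1, hz.2⟩
    rw [← integral_add_adjacent_intervals (hint hb ha) (hint ha hv), integral_symm v a]
    linarith
  refine tendsto_atBot_mono' _ ?_
    (tendsto_atBot_add_const_right _ ((∫ z in b..a, f z) - log a) tendsto_log_nhdsGT_zero)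
  filter_upwards [Ioo_mem_nhdsGT ha] with v hv using hbound v hv

theorem continuousOn_sqrt_sub_log_sub_one_div_rpow (p : ℝ) :
    ContinuousOn (fun z => √(z - log z - 1) / z ^ p) (Ioi 0) := by
  refine ContinuousOn.div ?_ (continuousOn_id.rpow_const fun z hz ↦ Or.inl (ne_of_gt hz))
    fun z hz ↦ (rpow_pos_of_pos hz p).ne'
  exact ((continuousOn_id.sub (continuousOn_log.mono fun z hz ↦ ne_of_gt hz)).sub
    continuousOn_const).sqrt

theorem inv_le_sqrt_sub_log_sub_one_div_rpow {p z : ℝ} (hp : 1 ≤ p) (hz : z ∈ Ioc 0 (exp (-2))) :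
    z⁻¹ ≤ √(z - log z - 1) / z ^ p := by
  obtain ⟨hz0, hz⟩ := hz
  have hlog : log z ≤ -2 := (log_le_iff_le_exp hz0).mpr hz
  have hsqrt : 1 ≤ √(z - log z - 1) := one_le_sqrt.mpr (by linarith)
  have hz1 : z ≤ 1 := hz.trans (exp_le_one_iff.mpr (by norm_num))
  have hpow : z ^ p ≤ z := by
    simpa using rpow_le_rpow_of_exponent_ge hz0 hz1 hp
  rw [inv_eq_one_div]
  exact div_le_div₀ (zero_le_one.trans hsqrt) hsqrt (rpow_pos_of_pos hz0 p) hpow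

theorem Psi_tendsto_atBot (β : ℝ) (hβ : -3 ≤ β) :
    Tendsto (fun v : ℝ =>
        ∫ z in (1:ℝ)..v, Real.sqrt (z - Real.log z - 1) / z ^ ((β + 5) / 2))
      (nhdsWithin 0 (Set.Ioi 0)) atBot :=
  tendsto_integral_nhdsGT_zero_atBot_of_inv_le 1 (exp_pos (-2)) one_pos
    (continuousOn_sqrt_sub_log_sub_one_div_rpow _)
    fun _ hz ↦ inv_le_sqrt_sub_log_sub_one_div_rpow (by linarith) hz
end

section
/- Let φ(z) = z - ln z - 1 and for α > 0 define Φ(v) = ∫₁ᵛ √φ(z)/z^(α+1) dz. Then there exist positive constants A₁, A₂ such that |Φ(v)| ≥ A₁ v^(-α) - A₂ for all 0 < v ≤ 1. -/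
open Real MeasureTheory intervalIntegral

theorem Phi_growth_at_zero (α : ℝ) (hα : 0 < α) :
    ∃ A₁ A₂ : ℝ, 0 < A₁ ∧ 0 < A₂ ∧
      ∀ v : ℝ, 0 < v → v ≤ 1 →
        A₁ * v ^ (-α) - A₂ ≤
          |∫ z in (1:ℝ)..v, Real.sqrt (z - Real.log z - 1) / z ^ (α + 1)| := by
  have hlog2 : (1:ℝ)/2 < Real.log 2 := by
    rw [lt_log_iff_exp_lt (by norm_num : (0:ℝ) < 2)]
    have h1 : Real.exp 1 < 2.7182818286 := Real.exp_one_lt_d9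
    have h2 : Real.exp (1/2) * Real.exp (1/2) = Real.exp 1 := by
      rw [← Real.exp_add]; norm_num
    nlinarith [Real.exp_pos (1/2 : ℝ)]
  set c := Real.sqrt (Real.log 2 - 1/2) with hc
  have hcpos : 0 < c := Real.sqrt_pos.mpr (by linarith)
  have h2pow : (0:ℝ) < (2:ℝ) ^ α := Real.rpow_pos_of_pos two_pos α
  -- continuity / integrability of the integrand on positive intervals
  set f : ℝ → ℝ := fun z => Real.sqrt (z - Real.log z - 1) / z ^ (α + 1) with hf
  have hcont : ContinuousOn f {z : ℝ | 0 < z} := by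
    apply ContinuousOn.div
    · apply ContinuousOn.sqrt
      exact (continuousOn_id.sub (Real.continuousOn_log.mono
        (fun z hz => Set.mem_compl_singleton_iff.mpr (ne_of_gt hz)))).sub
        continuousOn_const
    · exact fun z hz => (Real.continuousAt_rpow_const z (α+1)
        (Or.inl (ne_of_gt hz))).continuousWithinAt
    · exact fun z hz => (Real.rpow_pos_of_pos hz _).ne'
  have hint : ∀ a b : ℝ, 0 < a → 0 < b →
      IntervalIntegrable f volume a b := by
    intro a b ha hb
    apply (hcont.mono ?_).intervalIntegrable
    intro z hz
    rcases le_total a b with h | h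
    · rw [Set.uIcc_of_le h] at hz; exact lt_of_lt_of_le ha hz.1
    · rw [Set.uIcc_of_ge h] at hz; exact lt_of_lt_of_le hb hz.1
  have hhalf : ((1:ℝ)/2) ^ (-α) = (2:ℝ) ^ α := by
    rw [one_div, ← Real.rpow_neg_one (2:ℝ),
      ← Real.rpow_mul (by norm_num : (0:ℝ) ≤ 2)]
    norm_num
  refine ⟨c / α, c * (2:ℝ) ^ α / α, div_pos hcpos hα,
    div_pos (mul_pos hcpos h2pow) hα, ?_⟩
  intro v hv hv1
  -- rewrite the absolute value
  have habs : |∫ z in (1:ℝ)..v, f z| = ∫ z in v..(1:ℝ), f z := by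
    rw [intervalIntegral.integral_symm, abs_neg, abs_of_nonneg]
    apply intervalIntegral.integral_nonneg hv1
    intro u hu
    exact div_nonneg (Real.sqrt_nonneg _)
      (Real.rpow_nonneg (le_trans hv.le hu.1) _)
  rw [habs]
  rcases le_or_gt v (1/2) with hvh | hvh
  · -- main case : v ≤ 1/2
    have hsplit : (∫ z in v..(1:ℝ), f z)
        = (∫ z in v..(1/2:ℝ), f z) + ∫ z in (1/2:ℝ)..1, f z :=
      (intervalIntegral.integral_add_adjacent_intervals
        (hint v (1/2) hv (by norm_num)) (hint (1/2) 1 (by norm_num) one_pos)).symm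
    have h2nonneg : 0 ≤ ∫ z in (1/2:ℝ)..1, f z := by
      apply intervalIntegral.integral_nonneg (by norm_num)
      intro u hu
      exact div_nonneg (Real.sqrt_nonneg _) (Real.rpow_nonneg (by linarith [hu.1]) _)
    -- compare with c * z ^ (-(α+1)) on [v, 1/2]
    have hzero : (0:ℝ) ∉ Set.uIcc v (1/2:ℝ) := by
      rw [Set.uIcc_of_le hvh]
      intro h; exact absurd h.1 (not_le.mpr hv)
    have hgint : IntervalIntegrable (fun z : ℝ => c * z ^ (-(α+1))) volume v (1/2) :=
      (intervalIntegrable_rpow (Or.inr hzero)).const_mul c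
    have hmono : (∫ z in v..(1/2:ℝ), c * z ^ (-(α+1)))
        ≤ ∫ z in v..(1/2:ℝ), f z := by
      apply intervalIntegral.integral_mono_on hvh hgint (hint v (1/2) hv (by norm_num))
      intro z hz
      have hz0 : 0 < z := lt_of_lt_of_le hv hz.1
      have hrw : z ^ (-(α+1)) = 1 / z ^ (α+1) := by
        rw [Real.rpow_neg hz0.le, one_div]
      rw [hrw, mul_one_div]
      apply div_le_div_of_nonneg_right ?_ (Real.rpow_nonneg hz0.le _)
      · apply Real.sqrt_le_sqrt
        have hlogz : Real.log (2*z) = Real.log 2 + Real.log z :=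
          Real.log_mul two_ne_zero (ne_of_gt hz0)
        have h2z : Real.log (2*z) ≤ 2*z - 1 :=
          Real.log_le_sub_one_of_pos (by linarith)
        have hz2 : z ≤ 1/2 := hz.2
        linarith
    have hval : (∫ z in v..(1/2:ℝ), c * z ^ (-(α+1)))
        = c * (v ^ (-α) - (2:ℝ) ^ α) / α := by
      rw [intervalIntegral.integral_const_mul, integral_rpow (Or.inr ⟨by linarith, hzero⟩)]
      have : -(α+1) + 1 = -α := by ring
      rw [this, hhalf]
      ring
    calc c / α * v ^ (-α) - c * (2:ℝ) ^ α / α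
        = c * (v ^ (-α) - (2:ℝ) ^ α) / α := by ring
      _ = ∫ z in v..(1/2:ℝ), c * z ^ (-(α+1)) := hval.symm
      _ ≤ ∫ z in v..(1/2:ℝ), f z := hmono
      _ ≤ (∫ z in v..(1/2:ℝ), f z) + ∫ z in (1/2:ℝ)..1, f z := le_add_of_nonneg_right h2nonneg
      _ = ∫ z in v..(1:ℝ), f z := hsplit.symm
  · -- easy case : v > 1/2, LHS ≤ 0
    have hpow_le : v ^ (-α) ≤ (2:ℝ) ^ α := by
      rw [← hhalf]
      rw [Real.rpow_neg hv.le, Real.rpow_neg (by norm_num : (0:ℝ) ≤ 1/2)]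
      apply inv_anti₀ (Real.rpow_pos_of_pos (by norm_num) _)
      exact Real.rpow_le_rpow (by norm_num) hvh.le hα.le
    have h0 : c / α * v ^ (-α) - c * (2:ℝ) ^ α / α ≤ 0 := by
      have : c / α * v ^ (-α) ≤ c / α * (2:ℝ) ^ α :=
        mul_le_mul_of_nonneg_left hpow_le (le_of_lt (div_pos hcpos hα))
      have heq : c / α * (2:ℝ) ^ α = c * (2:ℝ) ^ α / α := by ring
      linarith [heq ▸ this]
    refine le_trans h0 ?_
    apply intervalIntegral.integral_nonneg hv1
    intro u hu
    exact div_nonneg (Real.sqrt_nonneg _) (Real.rpow_nonneg (le_trans hv.le hu.1) _)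
end

section
/- For smooth positive functions v(t,x) with v_t = u_x (for some smooth u), the identity u_x · ( -v_xx/v^(β+5) + ((β+5)/2) v_x²/v^(β+6) ) = ∂_t( v_x²/(2 v^(β+5)) ) + ∂_x( -u_x v_x / v^(β+5) ) holds pointwise. -/
open Function
open scoped ContDiff

lemma hasDerivAt_fix_fst {F : ℝ × ℝ → ℝ} (hF : Differentiable ℝ F) (t x : ℝ) :
    HasDerivAt (fun y => F (t, y)) (fderiv ℝ F (t, x) (0, 1)) x :=
  (hF (t, x)).hasFDerivAt.comp_hasDerivAt x (HasDerivAt.prodMk (hasDerivAt_const x t) (hasDerivAt_id x))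

lemma hasDerivAt_fix_snd {F : ℝ × ℝ → ℝ} (hF : Differentiable ℝ F) (t x : ℝ) :
    HasDerivAt (fun s => F (s, x)) (fderiv ℝ F (t, x) (1, 0)) t :=
  (hF (t, x)).hasFDerivAt.comp_hasDerivAt t (HasDerivAt.prodMk (hasDerivAt_id t) (hasDerivAt_const t x))

lemma hasDerivAt_fix_fst' {E : Type*} [NormedAddCommGroup E] [NormedSpace ℝ E]
    {F : ℝ × ℝ → E} (hF : Differentiable ℝ F) (t x : ℝ) :
    HasDerivAt (fun y => F (t, y)) (fderiv ℝ F (t, x) (0, 1)) x :=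
  (hF (t, x)).hasFDerivAt.comp_hasDerivAt x (HasDerivAt.prodMk (hasDerivAt_const x t) (hasDerivAt_id x))

lemma hasDerivAt_fix_snd' {E : Type*} [NormedAddCommGroup E] [NormedSpace ℝ E]
    {F : ℝ × ℝ → E} (hF : Differentiable ℝ F) (t x : ℝ) :
    HasDerivAt (fun s => F (s, x)) (fderiv ℝ F (t, x) (1, 0)) t :=
  (hF (t, x)).hasFDerivAt.comp_hasDerivAt t (HasDerivAt.prodMk (hasDerivAt_id t) (hasDerivAt_const t x))

/-- Clairaut for curried smooth functions. -/
lemma mixed_deriv_swap (v : ℝ → ℝ → ℝ) (hv : ContDiff ℝ (⊤ : ℕ∞) (Function.uncurry v)) (t x : ℝ) :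
    HasDerivAt (fun s => deriv (fun y => v s y) x)
      (deriv (fun y => deriv (fun s => v s y) t) x) t := by
  set F := Function.uncurry v with hF
  have hFd : Differentiable ℝ F := hv.differentiable (by simp)
  have hG : ContDiff ℝ (⊤ : ℕ∞) (fderiv ℝ F) := hv.fderiv_right (by simp)
  have hGd : Differentiable ℝ (fderiv ℝ F) := hG.differentiable (by simp)
  -- first partials as fderiv applications
  have hx1 : ∀ s y : ℝ, deriv (fun y => v s y) x = fderiv ℝ F (s, x) (0, 1) := by
    intro s y
    exact (hasDerivAt_fix_fst hFd s x).deriv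
  have hx2 : ∀ y : ℝ, deriv (fun s => v s y) t = fderiv ℝ F (t, y) (1, 0) := by
    intro y
    exact (hasDerivAt_fix_snd hFd t y).deriv
  -- second derivatives
  have h1 : HasDerivAt (fun s => fderiv ℝ F (s, x) (0, 1))
      (fderiv ℝ (fderiv ℝ F) (t, x) (1, 0) (0, 1)) t := by
    have := (hasDerivAt_fix_snd' hGd t x).clm_apply (hasDerivAt_const t ((0, 1) : ℝ × ℝ))
    simpa using this
  have h2 : HasDerivAt (fun y => fderiv ℝ F (t, y) (1, 0))
      (fderiv ℝ (fderiv ℝ F) (t, x) (0, 1) (1, 0)) x := by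
    have := (hasDerivAt_fix_fst' hGd t x).clm_apply (hasDerivAt_const x ((1, 0) : ℝ × ℝ))
    simpa using this
  have hsymm : fderiv ℝ (fderiv ℝ F) (t, x) (1, 0) (0, 1)
      = fderiv ℝ (fderiv ℝ F) (t, x) (0, 1) (1, 0) :=
    second_derivative_symmetric (fun y => (hFd y).hasFDerivAt)
      (hGd (t, x)).hasFDerivAt _ _
  have hfun : (fun s => deriv (fun y => v s y) x) = (fun s => fderiv ℝ F (s, x) (0, 1)) :=
    funext fun s => hx1 s x
  have hfun2 : (fun y => deriv (fun s => v s y) t) = (fun y => fderiv ℝ F (t, y) (1, 0)) :=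
    funext fun y => hx2 y
  rw [hfun, hfun2, h2.deriv, ← hsymm]
  exact h1

theorem korteweg_energy_identity (β : ℝ) (v u : ℝ → ℝ → ℝ)
    (hv : ContDiff ℝ (⊤ : ℕ∞) (Function.uncurry v))
    (hu : ContDiff ℝ (⊤ : ℕ∞) (Function.uncurry u))
    (hvpos : ∀ t x, 0 < v t x)
    (hmass : ∀ t x, deriv (fun s => v s x) t = deriv (fun y => u t y) x) :
    ∀ t x : ℝ,
      deriv (fun y => u t y) x *
          (-(deriv (deriv (fun y => v t y)) x) / (v t x) ^ (β + 5)
            + ((β + 5) / 2) * (deriv (fun y => v t y) x) ^ 2 / (v t x) ^ (β + 6))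
        = deriv (fun s => (deriv (fun y => v s y) x) ^ 2 / (2 * (v s x) ^ (β + 5))) t
          + deriv (fun y =>
              -(deriv (fun z => u t z) y) * (deriv (fun z => v t z) y) / (v t y) ^ (β + 5)) x := by
  intro t x
  have hV : 0 < v t x := hvpos t x
  -- smooth slices
  have hg : ContDiff ℝ (⊤ : ℕ∞) (fun y => v t y) :=
    hv.comp (contDiff_const.prodMk contDiff_id)
  have hgu : ContDiff ℝ (⊤ : ℕ∞) (fun y => u t y) :=
    hu.comp (contDiff_const.prodMk contDiff_id)
  have hgd : ContDiff ℝ ∞ (deriv (fun y => v t y)) :=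
    (contDiff_infty_iff_deriv.mp (hg.of_le (by simp))).2
  have hgud : ContDiff ℝ ∞ (deriv (fun y => u t y)) :=
    (contDiff_infty_iff_deriv.mp (hgu.of_le (by simp))).2
  set W := deriv (fun y => v t y) x with hW
  set Vxx := deriv (deriv (fun y => v t y)) x with hVxx
  set Ux := deriv (fun y => u t y) x with hUx
  set Uxx := deriv (deriv (fun y => u t y)) x with hUxx
  -- basic HasDerivAt facts at x
  have hvx : HasDerivAt (fun y => v t y) W x :=
    ((hg.differentiable (by simp)) x).hasDerivAt
  have hux : HasDerivAt (fun y => u t y) Ux x :=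
    ((hgu.differentiable (by simp)) x).hasDerivAt
  have hgw : HasDerivAt (deriv (fun y => v t y)) Vxx x :=
    ((hgd.differentiable (by norm_num)) x).hasDerivAt
  have hguw : HasDerivAt (deriv (fun y => u t y)) Uxx x :=
    ((hgud.differentiable (by norm_num)) x).hasDerivAt
  -- time derivative of v is Ux
  have hvt : HasDerivAt (fun s => v s x) Ux t := by
    have h := hasDerivAt_fix_snd (hv.differentiable (by simp)) t x
    have : deriv (fun s => v s x) t = fderiv ℝ (Function.uncurry v) (t, x) (1, 0) := h.deriv
    rw [← this, hmass t x] at h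
    exact h
  -- mixed derivative : time derivative of v_x is Uxx  (Clairaut + mass eq)
  have hmix : HasDerivAt (fun s => deriv (fun y => v s y) x) Uxx t := by
    have h := mixed_deriv_swap v hv t x
    have heq : (fun y => deriv (fun s => v s y) t) = deriv (fun y => u t y) := by
      funext y; exact hmass t y
    rwa [heq] at h
  -- derivative of the time term
  have hA : (0:ℝ) < (v t x) ^ (β + 5) := Real.rpow_pos_of_pos hV _
  have hden_t : HasDerivAt (fun s => 2 * (v s x) ^ (β + 5))
      (2 * (Ux * (β + 5) * (v t x) ^ (β + 5 - 1))) t :=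
    ((hvt.rpow_const (Or.inl hV.ne')).const_mul 2)
  have hnum_t : HasDerivAt (fun s => (deriv (fun y => v s y) x) ^ 2)
      (2 * W ^ 1 * Uxx) t := by
    simpa using hmix.fun_pow 2
  have htterm := (hnum_t.fun_div hden_t (by positivity)).deriv
  -- derivative of the space term
  have hnum_x : HasDerivAt (fun y => -(deriv (fun z => u t z) y) * (deriv (fun z => v t z) y))
      (-Uxx * W + -Ux * Vxx) x := hguw.neg.mul hgw
  have hden_x : HasDerivAt (fun y => (v t y) ^ (β + 5))
      (W * (β + 5) * (v t x) ^ (β + 5 - 1)) x :=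
    hvx.rpow_const (Or.inl hV.ne')
  have hxterm := (hnum_x.fun_div hden_x hA.ne').deriv
  rw [htterm, hxterm]
  have e1 : (v t x) ^ (β + 5 - 1) = (v t x) ^ (β + 5) / v t x :=
    Real.rpow_sub_one hV.ne' _
  have e2 : (v t x) ^ (β + 6) = (v t x) ^ (β + 5) * v t x := by
    rw [show (β + 6 : ℝ) = β + 5 + 1 by ring, Real.rpow_add_one hV.ne']
  rw [e1, e2]
  field_simp
  ring
end

section
/- Let θ : [0,T] × ℝ → ℝ be a smooth positive solution of C_v θ_t + (Rθ/v) u_x = ((θ^λ θ_x)/v)_x + u_x²/v^(α+1), where v, u are smooth, v > 0. Then the function 1/θ satisfies C_v (1/θ)_t ≤ ( (θ^λ/v) (1/θ)_x )_x + (R²/4) v^(α-1) pointwise. -/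
lemma aux_ineq (R a b vv c d e dy F' : ℝ) (hb : 0 < b) (hvv : 0 < vv)
    (hc : 0 < c) (hd : 0 < d) (he : 0 < e) (hcd : c = d * vv ^ 2) :
    -(F' + a ^ 2 / c - R * b / vv * a) / b ^ 2
      ≤ F' * (-((b ^ 2)⁻¹)) + e * dy / vv * (2 * dy / b ^ 3) + R ^ 2 / 4 * d := by
  have h1 : 0 ≤ e * dy / vv * (2 * dy / b ^ 3) := by
    have h : e * dy / vv * (2 * dy / b ^ 3) = 2 * e * dy ^ 2 / (vv * b ^ 3) := by ring
    rw [h]; positivity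
  have key : R ^ 2 / 4 * d - (R * b / vv * a / b ^ 2 - a ^ 2 / c / b ^ 2)
      = (R * c * b - 2 * a * vv) ^ 2 / (4 * c * b ^ 2 * vv ^ 2) := by
    subst hcd
    field_simp
    ring
  have h2 : R * b / vv * a / b ^ 2 - a ^ 2 / c / b ^ 2 ≤ R ^ 2 / 4 * d := by
    nlinarith [key, div_nonneg (sq_nonneg (R * c * b - 2 * a * vv))
      (le_of_lt (by positivity : (0:ℝ) < 4 * c * b ^ 2 * vv ^ 2))]
  have h3 : -(F' + a ^ 2 / c - R * b / vv * a) / b ^ 2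
      = F' * (-((b ^ 2)⁻¹)) + (R * b / vv * a / b ^ 2 - a ^ 2 / c / b ^ 2) := by
    field_simp
    ring
  rw [h3]
  linarith

theorem inverse_temperature_inequality
    (Cv R α lam : ℝ) (hCv : 0 < Cv) (hR : 0 < R) (T : ℝ)
    (v u θ : ℝ → ℝ → ℝ)
    (hv : ContDiff ℝ (⊤ : ℕ∞) (Function.uncurry v))
    (hu : ContDiff ℝ (⊤ : ℕ∞) (Function.uncurry u))
    (hθ : ContDiff ℝ (⊤ : ℕ∞) (Function.uncurry θ))
    (hvpos : ∀ t x, 0 < v t x) (hθpos : ∀ t x, 0 < θ t x)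
    (heq : ∀ t x, t ∈ Set.Icc 0 T →
      Cv * deriv (fun s => θ s x) t
          + (R * θ t x / v t x) * deriv (fun y => u t y) x
        = deriv (fun y => (θ t y) ^ lam * deriv (fun z => θ t z) y / v t y) x
          + (deriv (fun y => u t y) x) ^ 2 / (v t x) ^ (α + 1)) :
    ∀ t x, t ∈ Set.Icc 0 T →
      Cv * deriv (fun s => 1 / θ s x) t
        ≤ deriv (fun y => (θ t y) ^ lam / v t y * deriv (fun z => 1 / θ t z) y) x
          + (R ^ 2 / 4) * (v t x) ^ (α - 1) := by
  intro t x ht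
  have hθt : ContDiff ℝ ((⊤ : ℕ∞) : WithTop ℕ∞) (fun y => θ t y) :=
    (hθ.of_le (by simp)).comp (contDiff_const.prodMk contDiff_id)
  have hθtd : Differentiable ℝ (fun y => θ t y) :=
    hθt.differentiable (by simp)
  have hθyd : Differentiable ℝ (deriv (fun y => θ t y)) :=
    (contDiff_infty_iff_deriv.mp hθt).2.differentiable (by simp)
  have hθs : Differentiable ℝ (fun s => θ s x) :=
    ((hθ.of_le (by simp)).comp (contDiff_id.prodMk contDiff_const)).differentiable
      one_ne_zero
  have hvtd : Differentiable ℝ (fun y => v t y) :=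
    ((hv.of_le (by simp)).comp (contDiff_const.prodMk contDiff_id)).differentiable
      one_ne_zero
  -- spatial derivative of 1/θ
  have hinv : ∀ y, deriv (fun z => 1 / θ t z) y
      = -deriv (fun z => θ t z) y / (θ t y) ^ 2 := by
    intro y
    have h : (fun z => 1 / θ t z) = fun z => (θ t z)⁻¹ := by
      funext z; rw [one_div]
    rw [h, deriv_fun_inv'' (hθtd y) (ne_of_gt (hθpos t y))]
  -- time derivative of 1/θ
  have hinvt : deriv (fun s => 1 / θ s x) t
      = -deriv (fun s => θ s x) t / (θ t x) ^ 2 := by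
    have h : (fun s => 1 / θ s x) = fun s => (θ s x)⁻¹ := by
      funext s; rw [one_div]
    rw [h, deriv_fun_inv'' (hθs t) (ne_of_gt (hθpos t x))]
  -- rewrite the flux function
  have hfun : (fun y => (θ t y) ^ lam / v t y * deriv (fun z => 1 / θ t z) y)
      = fun y => ((θ t y) ^ lam * deriv (fun z => θ t z) y / v t y)
          * (-(((θ t y) ^ 2)⁻¹)) := by
    funext y
    rw [hinv y]
    have hv0 := (hvpos t y).ne'
    have hθ0 := (hθpos t y).ne'
    field_simp
  have hF : DifferentiableAt ℝ
      (fun y => (θ t y) ^ lam * deriv (fun z => θ t z) y / v t y) x := by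
    have h1 : DifferentiableAt ℝ (fun y => (θ t y) ^ lam) x :=
      (hθtd x).rpow_const (Or.inl (hθpos t x).ne')
    exact (h1.mul (hθyd x)).div (hvtd x) (hvpos t x).ne'
  have hw : HasDerivAt (fun y => -(((θ t y) ^ 2)⁻¹))
      (2 * deriv (fun z => θ t z) x / (θ t x) ^ 3) x := by
    have h : HasDerivAt (fun y => -(((θ t y) ^ 2)⁻¹)) _ x := (((hθtd x).hasDerivAt.fun_pow 2).fun_inv
      (pow_ne_zero 2 (hθpos t x).ne')).fun_neg
    convert h using 1
    have hb := (hθpos t x).ne'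
    field_simp
    ring
  have hG : deriv (fun y => (θ t y) ^ lam / v t y * deriv (fun z => 1 / θ t z) y) x
      = deriv (fun y => (θ t y) ^ lam * deriv (fun z => θ t z) y / v t y) x
          * (-(((θ t x) ^ 2)⁻¹))
        + ((θ t x) ^ lam * deriv (fun z => θ t z) x / v t x)
          * (2 * deriv (fun z => θ t z) x / (θ t x) ^ 3) := by
    rw [hfun]
    exact (hF.hasDerivAt.mul hw).deriv
  rw [hinvt, hG]
  have hb : 0 < θ t x := hθpos t x
  have hvv : 0 < v t x := hvpos t x
  have hc : 0 < (v t x) ^ (α + 1) := Real.rpow_pos_of_pos hvv _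
  have hd : 0 < (v t x) ^ (α - 1) := Real.rpow_pos_of_pos hvv _
  have he : 0 < (θ t x) ^ lam := Real.rpow_pos_of_pos hb _
  have hcd : (v t x) ^ (α + 1) = (v t x) ^ (α - 1) * (v t x) ^ 2 := by
    rw [← Real.rpow_natCast (v t x) 2, ← Real.rpow_add hvv]
    congr 1
    push_cast
    ring
  have hCvDt : Cv * deriv (fun s => θ s x) t
      = deriv (fun y => (θ t y) ^ lam * deriv (fun z => θ t z) y / v t y) x
        + (deriv (fun y => u t y) x) ^ 2 / (v t x) ^ (α + 1)
        - R * θ t x / v t x * deriv (fun y => u t y) x := by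
    linarith [heq t x ht]
  have hstep : Cv * (-deriv (fun s => θ s x) t / (θ t x) ^ 2)
      = -(Cv * deriv (fun s => θ s x) t) / (θ t x) ^ 2 := by ring
  rw [hstep, hCvDt]
  have := aux_ineq R (deriv (fun y => u t y) x) (θ t x) (v t x)
    ((v t x) ^ (α + 1)) ((v t x) ^ (α - 1)) ((θ t x) ^ lam)
    (deriv (fun z => θ t z) x)
    (deriv (fun y => (θ t y) ^ lam * deriv (fun z => θ t z) y / v t y) x)
    hb hvv hc hd he hcd
  linarith [this]
end
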